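/- The product of the smallest and the largest ratio is controlled by the scaling error: 1/(1 + ε) ≤ (min_{i} u_i) · (max_{i} u_i) ≤ 1/(1 − ε). -/

import Mathlib

open Finset

/-!
Write `u = v / v̂` and let `m`, `M` be its minimum and maximum. Entrywise
`v̂ᵢ Aᵢⱼ v̂ⱼ = vᵢ Aᵢⱼ vⱼ / (uᵢ uⱼ)`, so the `v̂`-row sums are averages of `1 / (uᵢ uⱼ)` with
respect to the stochastic rows `vᵢ Aᵢⱼ vⱼ`. In the row where `uᵢ = m` every `uᵢ uⱼ ≤ m M`,
so that row sum is at least `1 / (m M)`; in the row where `uᵢ = M` it is at most `1 / (m M)`.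
Both row sums lie in `[1 - ε, 1 + ε]`.
-/

section WeightedAverage

variable {ι : Type*} [Fintype ι] {w d : ι → ℝ} {c : ℝ}

lemma one_div_le_sum_div_of_forall_le (hw : ∀ j, 0 ≤ w j) (hsum : ∑ j, w j = 1)
    (hd : ∀ j, 0 < d j) (hdc : ∀ j, d j ≤ c) : 1 / c ≤ ∑ j, w j / d j := by
  rw [← hsum, sum_div]
  gcongr with j
  exacts [hw j, hd j, hdc j]

lemma sum_div_le_one_div_of_forall_le (hw : ∀ j, 0 ≤ w j) (hsum : ∑ j, w j = 1)
    (hc : 0 < c) (hcd : ∀ j, c ≤ d j) : ∑ j, w j / d j ≤ 1 / c := by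
  rw [← hsum, sum_div]
  gcongr with j
  exacts [hw j, hcd j]

end WeightedAverage

section MinMaxRowSums

variable {ι : Type*} [Fintype ι] (hne : (univ : Finset ι).Nonempty)
  {w : ι → ι → ℝ} {u : ι → ℝ}

lemma exists_one_div_inf'_mul_sup'_le_sum_div (hw : ∀ i j, 0 ≤ w i j)
    (hrow : ∀ i, ∑ j, w i j = 1) (hu : ∀ i, 0 < u i) :
    ∃ i, 1 / (univ.inf' hne u * univ.sup' hne u) ≤ ∑ j, w i j / (u i * u j) := by
  obtain ⟨i, -, hi⟩ := exists_mem_eq_inf' hne u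
  refine ⟨i, one_div_le_sum_div_of_forall_le (hw i) (hrow i)
    (fun j => mul_pos (hu i) (hu j)) fun j => ?_⟩
  rw [hi]
  exact mul_le_mul_of_nonneg_left (le_sup' u (mem_univ j)) (hu i).le

lemma exists_sum_div_le_one_div_inf'_mul_sup' (hw : ∀ i j, 0 ≤ w i j)
    (hrow : ∀ i, ∑ j, w i j = 1) (hu : ∀ i, 0 < u i) :
    ∃ i, ∑ j, w i j / (u i * u j) ≤ 1 / (univ.inf' hne u * univ.sup' hne u) := by
  obtain ⟨i, -, hi⟩ := exists_mem_eq_sup' hne u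
  obtain ⟨k, -, hk⟩ := exists_mem_eq_inf' hne u
  refine ⟨i, sum_div_le_one_div_of_forall_le (hw i) (hrow i)
    (mul_pos (hk ▸ hu k) (hi ▸ hu i)) fun j => ?_⟩
  rw [hi, mul_comm]
  exact mul_le_mul_of_nonneg_left (inf'_le u (mem_univ j)) (hu i).le

end MinMaxRowSums

lemma mul_mul_eq_div_ratio_mul_ratio {a x y x' y' : ℝ} (hx : x ≠ 0) (hy : y ≠ 0)
    (hx' : x' ≠ 0) (hy' : y' ≠ 0) :
    x' * a * y' = x * a * y / (x / x' * (y / y')) := by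
  field_simp

/-- The product of the smallest and the largest ratio `u i = v i / v̂ i`
is controlled by the scaling error: `1/(1+ε) ≤ (min_i u_i)·(max_i u_i) ≤ 1/(1-ε)`. -/
theorem min_max_ratio_product_bound
    {n : ℕ} (hn : 3 ≤ n)
    (A : Fin n → Fin n → ℝ)
    (hA_nonneg : ∀ i j, 0 ≤ A i j)
    (v : Fin n → ℝ) (hv : ∀ i, 0 < v i)
    (hds : ∀ i, ∑ j, v i * A i j * v j = 1)
    (ε : ℝ) (hε0 : 0 < ε) (hε1 : ε < 1)
    (vh : Fin n → ℝ) (hvh : ∀ i, 0 < vh i)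
    (happrox : ∀ i, |∑ j, vh i * A i j * vh j - 1| ≤ ε) :
    1 / (1 + ε) ≤
      (Finset.inf' Finset.univ ⟨⟨0, by omega⟩, Finset.mem_univ _⟩
          (fun i => v i / vh i)) *
      (Finset.sup' Finset.univ ⟨⟨0, by omega⟩, Finset.mem_univ _⟩
          (fun i => v i / vh i)) ∧
    (Finset.inf' Finset.univ ⟨⟨0, by omega⟩, Finset.mem_univ _⟩
          (fun i => v i / vh i)) *
      (Finset.sup' Finset.univ ⟨⟨0, by omega⟩, Finset.mem_univ _⟩
          (fun i => v i / vh i)) ≤ 1 / (1 - ε) := by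
  have hne : (univ : Finset (Fin n)).Nonempty := ⟨⟨0, by omega⟩, mem_univ _⟩
  set u : Fin n → ℝ := fun i => v i / vh i
  have hu : ∀ i, 0 < u i := fun i => div_pos (hv i) (hvh i)
  have hw : ∀ i j, 0 ≤ v i * A i j * v j := fun i j =>
    mul_nonneg (mul_nonneg (hv i).le (hA_nonneg i j)) (hv j).le
  have hrescale : ∀ i, ∑ j, vh i * A i j * vh j = ∑ j, v i * A i j * v j / (u i * u j) :=
    fun i => sum_congr rfl fun j _ =>
      mul_mul_eq_div_ratio_mul_ratio (hv i).ne' (hv j).ne' (hvh i).ne' (hvh j).ne'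
  obtain ⟨i, hi⟩ := exists_one_div_inf'_mul_sup'_le_sum_div hne hw hds hu
  obtain ⟨k, hk⟩ := exists_sum_div_le_one_div_inf'_mul_sup' hne hw hds hu
  rw [← hrescale] at hi hk
  have hmM : 0 < univ.inf' hne u * univ.sup' hne u :=
    mul_pos ((lt_inf'_iff hne).2 fun j _ => hu j) ((hu i).trans_le (le_sup' u (mem_univ i)))
  obtain ⟨-, hi_le⟩ := abs_le.mp (happrox i)
  obtain ⟨hk_ge, -⟩ := abs_le.mp (happrox k)
  constructor
  · exact (one_div_le hmM (by linarith : (0 : ℝ) < 1 + ε)).1 (by linarith)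
  · exact (le_one_div hmM (by linarith : (0 : ℝ) < 1 - ε)).2 (by linarith)
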